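/- Let X ⊂ ℝ be a finite set of prizes, c : 𝒜 → 𝒜 a choice correspondence on finite nonempty sets of lotteries satisfying FOSD and Continuity, and R a risk-consistent linear order on Δ(X) such that for every r ∈ Δ(X), c satisfies WARP and Independence over {B ∈ 𝒜 : r ∈ B and r R p for all p ∈ B}. Then for every r ∈ I := Δ(X) \ Δ({b,w}), the set ℙ₊^r := {p ∈ Δ(X) : r R p and r ∉ c({p,r})} contains a convex subset of Δ(X) of affine dimension |X| − 1. -/

import Mathlib

open scoped BigOperators

noncomputable section

/-- Lotteries over the finite prize set `X ⊂ ℝ`, as a subset of Euclidean space `ℝ^X`. -/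
abbrev Lot (X : Finset ℝ) : Type :=
  {p : EuclideanSpace ℝ ↥X // (∀ x, 0 ≤ p x) ∧ ∑ x, p x = 1}

variable {X : Finset ℝ}

noncomputable instance : DecidableEq (Lot X) := Classical.decEq _

/-- The degenerate distribution on prize `x`, as a vector. -/
def degv (x : ↥X) : EuclideanSpace ℝ ↥X := WithLp.toLp 2 (fun y => if y = x then 1 else 0)

/-- The degenerate lottery `δ_x`. -/
def deg (x : ↥X) : Lot X :=
  ⟨degv x, fun y => by by_cases h : y = x <;> simp [degv, h], by simp [degv]⟩

/-- The mixture `αp + (1-α)q`, as a vector. -/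
def mixv (α : ℝ) (p q : Lot X) : EuclideanSpace ℝ ↥X := α • p.1 + (1 - α) • q.1

/-- The best prize `b = max X` as an element of `X`. -/
def bIdx (hX : X.Nonempty) : ↥X := ⟨X.max' hX, X.max'_mem hX⟩

/-- The worst prize `w = min X` as an element of `X`. -/
def wIdx (hX : X.Nonempty) : ↥X := ⟨X.min' hX, X.min'_mem hX⟩

/-- `p` first-order stochastically dominates `q`. -/
def FOSDom (p q : Lot X) : Prop :=
  ∀ z ∈ X, (∑ x : ↥X, if z ≤ (x : ℝ) then q.1 x else 0) ≤
    ∑ x : ↥X, if z ≤ (x : ℝ) then p.1 x else 0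

/-- `p` is a mean-preserving spread of `q`. -/
def MPS (p q : Lot X) : Prop :=
  p ≠ q ∧ (∑ x : ↥X, p.1 x * (x : ℝ)) = (∑ x : ↥X, q.1 x * (x : ℝ)) ∧
  ∀ z : ℝ, (∑ x : ↥X, q.1 x * max (z - (x : ℝ)) 0) ≤
    ∑ x : ↥X, p.1 x * max (z - (x : ℝ)) 0

/-- `p` is an extreme spread of `q`. -/
def ES (hX : X.Nonempty) (p q : Lot X) : Prop :=
  ∃ β α : ℝ, 0 ≤ β ∧ β < 1 ∧ q.1 (bIdx hX) < α ∧ α < 1 - q.1 (wIdx hX) ∧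
    p.1 = β • q.1 + (1 - β) • (α • degv (bIdx hX) + (1 - α) • degv (wIdx hX))

/-- A reference order is risk-consistent if safer lotteries rank higher. -/
def RiskConsistent (hX : X.Nonempty) (R : Lot X → Lot X → Prop) : Prop :=
  ∀ p q : Lot X, (MPS p q ∨ ES hX p q) → R q p

/-- `p` is a mixture of `δ_b` and `δ_w`, i.e. `p ∈ Δ({b,w})`. -/
def inBW (hX : X.Nonempty) (p : Lot X) : Prop :=
  ∀ x : ↥X, x ≠ bIdx hX → x ≠ wIdx hX → p.1 x = 0

/-- Expected utility of lottery `p` under Bernoulli utility `u`. -/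
def EV (p : Lot X) (u : ↥X → ℝ) : ℝ := ∑ x : ↥X, p.1 x * u x

/-- `c` satisfies WARP over a collection `S` of choice problems. -/
def WARPover (c : Finset (Lot X) → Finset (Lot X)) (S : Set (Finset (Lot X))) : Prop :=
  ∀ A ∈ S, ∀ B ∈ S, B ⊆ A → (c A ∩ B).Nonempty → c A ∩ B = c B

/-- `c` satisfies Independence over a collection `S` of choice problems. -/
def IndepOver (c : Finset (Lot X) → Finset (Lot X)) (S : Set (Finset (Lot X))) : Prop :=
  ∀ A ∈ S, ∀ B ∈ S, ∀ α : ℝ, 0 < α → α < 1 →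
    ∀ p q s pas qas : Lot X, pas.1 = mixv α p s → qas.1 = mixv α q s →
      (p ∈ c A → q ∈ A → qas ∈ c B → pas ∈ B → pas ∈ c B) ∧
      (pas ∈ c A → qas ∈ A → q ∈ c B → p ∈ B → p ∈ c B)

/-- Continuity: `c` has a closed graph w.r.t. the Hausdorff distance. -/
def ClosedGraphC (c : Finset (Lot X) → Finset (Lot X)) : Prop :=
  ∀ (x : Lot X) (xs : ℕ → Lot X) (A : Finset (Lot X)) (As : ℕ → Finset (Lot X)),
    A.Nonempty → (∀ n, (As n).Nonempty) →
    Filter.Tendsto xs Filter.atTop (nhds x) →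
    Filter.Tendsto (fun n => Metric.hausdorffDist ((As n : Set (Lot X))) (A : Set (Lot X)))
      Filter.atTop (nhds 0) →
    (∀ n, xs n ∈ c (As n)) → x ∈ c A

/-- `c` admits an AREU representation with data `(R, u, r)`. -/
def IsAREU (hX : X.Nonempty) (c : Finset (Lot X) → Finset (Lot X))
    (R : Lot X → Lot X → Prop) (u : Lot X → ↥X → ℝ) (r : Finset (Lot X) → Lot X) : Prop :=
  IsLinearOrder (Lot X) R ∧ RiskConsistent hX R ∧
  (∀ p : Lot X, ∀ x y : ↥X, (x : ℝ) < (y : ℝ) → u p x < u p y) ∧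
  (∀ (p : Lot X) (x : ↥X), u p x ∈ Set.Icc (0 : ℝ) 1) ∧
  (∀ A : Finset (Lot X), A.Nonempty → r A ∈ A ∧ ∀ p ∈ A, R (r A) p) ∧
  (∀ A : Finset (Lot X), A.Nonempty → ∀ p : Lot X,
    p ∈ c A ↔ p ∈ A ∧ ∀ q ∈ A, EV q (u (r A)) ≤ EV p (u (r A))) ∧
  (∀ p q : Lot X, R q p → ∃ f : ℝ → ℝ, ConcaveOn ℝ (Set.Icc 0 1) f ∧
    (∀ t ∈ Set.Icc (0 : ℝ) 1, f t ∈ Set.Icc (0 : ℝ) 1) ∧ ∀ x : ↥X, u q x = f (u p x)) ∧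
  ClosedGraphC c


/-- First order stochastic dominance axiom on choice. -/
def FOSDAxiom (c : Finset (Lot X) → Finset (Lot X)) : Prop :=
  ∀ p q : Lot X, p ≠ q → FOSDom p q → ∀ A : Finset (Lot X), p ∈ A → q ∉ c A


/-!
Since `r` puts mass on a prize `m` strictly between `w` and `b`, the lottery `e` that moves all of
`r`'s mass except `r(w)` onto `b` first-order dominates `r` strictly, so `r ∉ c {e, r}`; by
Continuity the same holds on a ball around `e`. Near `e` lies a full-dimensional convex family of
lotteries riskier than `r`: spread a little of the mass of `r` at `m` along any lottery `y` of
mean `m` (a mean-preserving spread), then mix the result with `α δ_b + (1 - α) δ_w` (an extreme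
spread). Risk-consistency and transitivity of `R` give `r R p` for all of them, and the two
parameters `y` and `α` together move in every direction of the simplex.
-/

lemma wIdx_lt_of_ne (hX : X.Nonempty) {x : ↥X} (hx : x ≠ wIdx hX) : (wIdx hX : ℝ) < x :=
  (X.min'_le _ x.2).lt_of_ne fun h => hx (Subtype.ext h.symm)

lemma lt_bIdx_of_ne (hX : X.Nonempty) {x : ↥X} (hx : x ≠ bIdx hX) : (x : ℝ) < bIdx hX :=
  (X.le_max' _ x.2).lt_of_ne fun h => hx (Subtype.ext h)

def expectation (f : ↥X → ℝ) : EuclideanSpace ℝ ↥X →ₗ[ℝ] ℝ where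
  toFun v := ∑ x, v x * f x
  map_add' u v := by simp [add_mul, Finset.sum_add_distrib]
  map_smul' a v := by simp [Finset.mul_sum, mul_assoc]

@[simp] lemma expectation_apply (f : ↥X → ℝ) (v : EuclideanSpace ℝ ↥X) :
    expectation f v = ∑ x, v x * f x := rfl

@[simp] lemma expectation_degv (f : ↥X → ℝ) (x : ↥X) : expectation f (degv x) = f x := by
  simp [degv]

@[simp] lemma deg_val (x : ↥X) : (deg x).1 = degv x := rfl

lemma expectation_mixv (f : ↥X → ℝ) (a : ℝ) (p q : Lot X) :
    expectation f (mixv a p q) = a * expectation f p.1 + (1 - a) * expectation f q.1 := by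
  simp only [mixv, map_add, map_smul, smul_eq_mul]

namespace Lot

lemma expectation_one (p : Lot X) : expectation 1 p.1 = 1 := by simpa using p.2.2

lemma apply_le_one (p : Lot X) (x : ↥X) : p.1 x ≤ 1 :=
  (Finset.single_le_sum (f := fun y => p.1 y) (fun y _ => p.2.1 y) (Finset.mem_univ x)).trans_eq
    p.2.2

lemma norm_le_one (p : Lot X) : ‖p.1‖ ≤ 1 := by
  refine (sq_le_one_iff₀ (norm_nonneg _)).1 ?_
  rw [EuclideanSpace.norm_sq_eq]
  calc ∑ x, ‖p.1 x‖ ^ 2 ≤ ∑ x, p.1 x := Finset.sum_le_sum fun x _ => by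
        rw [Real.norm_of_nonneg (p.2.1 x), sq]
        exact mul_le_of_le_one_left (p.2.1 x) (p.apply_le_one x)
    _ = 1 := p.2.2

lemma dist_le_two (p q : Lot X) : dist p q ≤ 2 := by
  rw [Subtype.dist_eq, dist_eq_norm]
  linarith [norm_sub_le p.1 q.1, p.norm_le_one, q.norm_le_one]

lemma apply_add_apply_add_apply_le (p : Lot X) {x y z : ↥X} (hxy : x ≠ y) (hxz : x ≠ z)
    (hyz : y ≠ z) : p.1 x + p.1 y + p.1 z ≤ 1 := by
  have := Finset.sum_le_sum_of_subset_of_nonneg (Finset.subset_univ {x, y, z})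
    fun t _ _ => p.2.1 t
  rwa [Finset.sum_insert (by simp [hxy, hxz]), Finset.sum_pair hyz, ← add_assoc, p.2.2] at this

def mix (a : ℝ) (ha₀ : 0 ≤ a) (ha₁ : a ≤ 1) (p q : Lot X) : Lot X :=
  ⟨mixv a p q, fun x => by
    have := p.2.1 x; have := q.2.1 x
    simp only [mixv, PiLp.add_apply, PiLp.smul_apply, smul_eq_mul]
    nlinarith, by
    simpa [p.expectation_one, q.expectation_one] using expectation_mixv 1 a p q⟩

@[simp] lemma mix_val (a : ℝ) (ha₀ : 0 ≤ a) (ha₁ : a ≤ 1) (p q : Lot X) :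
    (mix a ha₀ ha₁ p q).1 = mixv a p q := rfl

lemma dist_mix_right (a : ℝ) (ha₀ : 0 ≤ a) (ha₁ : a ≤ 1) (p q : Lot X) :
    dist (mix a ha₀ ha₁ p q) q = a * dist p q := by
  have h : (mix a ha₀ ha₁ p q).1 - q.1 = a • (p.1 - q.1) := by simp only [mix, mixv]; module
  rw [Subtype.dist_eq, Subtype.dist_eq, dist_eq_norm, dist_eq_norm, h, norm_smul,
    Real.norm_of_nonneg ha₀]

lemma dist_mix_mix (a a' : ℝ) (ha₀ : 0 ≤ a) (ha₁ : a ≤ 1) (ha₀' : 0 ≤ a') (ha₁' : a' ≤ 1)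
    (p q : Lot X) : dist (mix a ha₀ ha₁ p q) (mix a' ha₀' ha₁' p q) = |a - a'| * dist p q := by
  have h : (mix a ha₀ ha₁ p q).1 - (mix a' ha₀' ha₁' p q).1 = (a - a') • (p.1 - q.1) := by
    simp only [mix, mixv]; module
  rw [Subtype.dist_eq, Subtype.dist_eq, dist_eq_norm, dist_eq_norm, h, norm_smul,
    Real.norm_eq_abs]

end Lot

lemma Metric.hausdorffDist_pair_le {α : Type*} [PseudoMetricSpace α] (p q r : α) :
    Metric.hausdorffDist ({p, r} : Set α) {q, r} ≤ dist p q := by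
  refine Metric.hausdorffDist_le_of_mem_dist dist_nonneg ?_ ?_ <;>
    rintro x (rfl | rfl)
  · exact ⟨q, by simp, le_rfl⟩
  · exact ⟨x, by simp, by simp⟩
  · exact ⟨p, by simp, (dist_comm _ _).le⟩
  · exact ⟨x, by simp, by simp⟩

lemma ClosedGraphC.isOpen_setOf_notMem_pair {c : Finset (Lot X) → Finset (Lot X)}
    (hcont : ClosedGraphC c) (r : Lot X) : IsOpen {p : Lot X | r ∉ c {p, r}} := by
  refine isOpen_compl_iff.2 (IsSeqClosed.isClosed fun {ps p} hps hlim => ?_)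
  refine hcont r (fun _ => r) {p, r} (fun n => {ps n, r}) ⟨r, by simp⟩ (fun _ => ⟨r, by simp⟩)
    tendsto_const_nhds ?_ fun n => hps n
  refine squeeze_zero (fun _ => Metric.hausdorffDist_nonneg) (fun n => ?_)
    (tendsto_iff_dist_tendsto_zero.1 hlim)
  simpa using Metric.hausdorffDist_pair_le (ps n) p r

lemma sum_ite_le_eq_expectation (z : ℝ) (v : EuclideanSpace ℝ ↥X) :
    (∑ x : ↥X, if z ≤ (x : ℝ) then v x else 0) =
      expectation (fun x => if z ≤ (x : ℝ) then 1 else 0) v := by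
  simp only [expectation_apply, mul_ite, mul_one, mul_zero]

lemma fosdom_mix_best_worst (hX : X.Nonempty) (q : Lot X) {α : ℝ} (hα₀ : 0 ≤ α) (hα₁ : α ≤ 1)
    (hqα : 1 - q.1 (wIdx hX) ≤ α) :
    FOSDom (Lot.mix α hα₀ hα₁ (deg (bIdx hX)) (deg (wIdx hX))) q := by
  intro z hz
  have hzb : z ≤ (bIdx hX : ℝ) := X.le_max' z hz
  rw [sum_ite_le_eq_expectation, sum_ite_le_eq_expectation]
  simp only [Lot.mix_val, expectation_mixv, deg_val, expectation_degv, if_pos hzb]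
  simp only [expectation_apply]
  by_cases hzw : z ≤ (wIdx hX : ℝ)
  · calc ∑ x, q.1 x * (if z ≤ (x : ℝ) then 1 else 0) ≤ ∑ x, q.1 x :=
          Finset.sum_le_sum fun x _ => mul_le_of_le_one_right (q.2.1 x) (by split_ifs <;> norm_num)
      _ = α * 1 + (1 - α) * if z ≤ (wIdx hX : ℝ) then 1 else 0 := by rw [q.2.2, if_pos hzw]; ring
  · calc ∑ x, q.1 x * (if z ≤ (x : ℝ) then 1 else 0)
          ≤ ∑ x, (q.1 x - if x = wIdx hX then q.1 x else 0) := Finset.sum_le_sum fun x _ => by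
            by_cases hxw : x = wIdx hX
            · subst hxw; simp [hzw]
            · have := q.2.1 x; simp only [if_neg hxw]; split_ifs <;> linarith
      _ = 1 - q.1 (wIdx hX) := by
        rw [Finset.sum_sub_distrib, q.2.2, Finset.sum_ite_eq', if_pos (Finset.mem_univ _)]
      _ ≤ α * 1 + (1 - α) * if z ≤ (wIdx hX : ℝ) then 1 else 0 := by rw [if_neg hzw]; linarith

def Lot.shiftToBest (hX : X.Nonempty) (r : Lot X) : Lot X :=
  Lot.mix (1 - r.1 (wIdx hX)) (by linarith [r.apply_le_one (wIdx hX)])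
    (by linarith [r.2.1 (wIdx hX)]) (deg (bIdx hX)) (deg (wIdx hX))

lemma FOSDAxiom.notMem_pair_shiftToBest {c : Finset (Lot X) → Finset (Lot X)}
    (hFOSD : FOSDAxiom c) {hX : X.Nonempty} {r : Lot X} {m : ↥X} (hmb : m ≠ bIdx hX)
    (hmw : m ≠ wIdx hX) (hrm : 0 < r.1 m) : r ∉ c {Lot.shiftToBest hX r, r} := by
  refine hFOSD _ r (fun h => ?_) (fosdom_mix_best_worst hX r _ _ le_rfl) _
    (Finset.mem_insert_self _ _)
  have hm := congrArg (fun p : Lot X => p.1 m) h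
  simp only [Lot.mix_val, mixv, deg_val, degv, PiLp.add_apply, PiLp.smul_apply,
    if_neg hmb, if_neg hmw, smul_eq_mul, mul_zero, add_zero] at hm
  linarith

lemma max_sub_le_expectation (y : Lot X) (t : ℝ) :
    max (t - expectation Subtype.val y.1) 0 ≤ expectation (fun x => max (t - (x : ℝ)) 0) y.1 := by
  have hconv : ConvexOn ℝ Set.univ fun u : ℝ => max (t - u) 0 :=
    ((convexOn_const t convex_univ).sub (concaveOn_id convex_univ)).sup
      (convexOn_const 0 convex_univ)
  simpa [mul_comm, Finset.mul_sum] using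
    hconv.map_sum_le (t := Finset.univ) (w := fun x => y.1 x) (p := fun x : ↥X => (x : ℝ))
      (fun x _ => y.2.1 x) y.2.2 (fun _ _ => Set.mem_univ _)

namespace Lot

def spread (r y : Lot X) (m : ↥X) (θ : ℝ) (hθ₀ : 0 ≤ θ) (hθ : θ ≤ r.1 m) : Lot X :=
  ⟨r.1 + θ • (y.1 - degv m), fun x => by
    have := r.2.1 x; have := y.2.1 x
    simp only [PiLp.add_apply, PiLp.smul_apply, PiLp.sub_apply, smul_eq_mul, degv]
    split_ifs with hx
    · subst hx; nlinarith
    · nlinarith, by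
    have h : expectation 1 (r.1 + θ • (y.1 - degv m)) = 1 := by
      simp only [map_add, map_smul, map_sub, r.expectation_one, y.expectation_one,
        expectation_degv, Pi.one_apply, sub_self, smul_zero, add_zero]
    simpa only [expectation_apply, Pi.one_apply, mul_one] using h⟩

variable {r y : Lot X} {m : ↥X} {θ : ℝ} {hθ₀ : 0 ≤ θ} {hθ : θ ≤ r.1 m}

@[simp] lemma spread_val : (spread r y m θ hθ₀ hθ).1 = r.1 + θ • (y.1 - degv m) := rfl

lemma spread_apply_le {x : ↥X} (hx : x ≠ m) : (spread r y m θ hθ₀ hθ).1 x ≤ r.1 x + θ := by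
  have := y.apply_le_one x
  simp only [spread_val, PiLp.add_apply, PiLp.smul_apply, PiLp.sub_apply, smul_eq_mul, degv,
    if_neg hx]
  nlinarith

lemma expectation_spread (f : ↥X → ℝ) :
    expectation f (spread r y m θ hθ₀ hθ).1 =
      expectation f r.1 + θ * (expectation f y.1 - f m) := by
  simp only [spread_val, map_add, map_smul, map_sub, expectation_degv, smul_eq_mul]

end Lot

lemma MPS.of_spread {r y : Lot X} {m : ↥X} {θ : ℝ} (hθ₀ : 0 ≤ θ) (hθ : θ ≤ r.1 m)
    (hy : expectation Subtype.val y.1 = m) (hne : Lot.spread r y m θ hθ₀ hθ ≠ r) :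
    MPS (Lot.spread r y m θ hθ₀ hθ) r := by
  refine ⟨hne, ?_, fun t => ?_⟩
  · have h := Lot.expectation_spread (y := y) (hθ₀ := hθ₀) (hθ := hθ) Subtype.val
    rwa [hy, sub_self, mul_zero, add_zero] at h
  · have hspread := Lot.expectation_spread (y := y) (hθ₀ := hθ₀) (hθ := hθ)
      fun x => max (t - (x : ℝ)) 0
    have hjensen := max_sub_le_expectation y t
    simp only [expectation_apply, hy] at hspread hjensen
    nlinarith

lemma RiskConsistent.rel_spread {hX : X.Nonempty} {R : Lot X → Lot X → Prop} [IsPreorder (Lot X) R]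
    (hrc : RiskConsistent hX R) {r y : Lot X} {m : ↥X} {θ : ℝ} (hθ₀ : 0 ≤ θ) (hθ : θ ≤ r.1 m)
    (hy : expectation Subtype.val y.1 = m) : R r (Lot.spread r y m θ hθ₀ hθ) := by
  by_cases h : Lot.spread r y m θ hθ₀ hθ = r
  · rw [h]; exact Std.Refl.refl r
  · exact hrc _ _ (Or.inl (MPS.of_spread hθ₀ hθ hy h))

lemma exists_weight_eq {lo hi μ : ℝ} (h₀ : lo ≤ μ) (h₁ : μ ≤ hi) :
    ∃ a ∈ Set.Icc (0 : ℝ) 1, a * hi + (1 - a) * lo = μ := by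
  have hμ : μ ∈ segment ℝ lo hi := by rw [segment_eq_Icc (h₀.trans h₁)]; exact ⟨h₀, h₁⟩
  obtain ⟨s, t, hs, ht, hst, h⟩ := hμ
  refine ⟨t, ⟨ht, by linarith⟩, ?_⟩
  rw [← h, smul_eq_mul, smul_eq_mul, ← hst]
  ring

lemma expectation_val_mix_deg (a : ℝ) (ha₀ : 0 ≤ a) (ha₁ : a ≤ 1) (x x' : ↥X) :
    expectation Subtype.val (Lot.mix a ha₀ ha₁ (deg x) (deg x')).1 = a * x + (1 - a) * x' := by
  simp only [Lot.mix_val, expectation_mixv, deg_val, expectation_degv]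

lemma Submodule.mem_of_smul_add_smul_mem {E : Type*} [AddCommGroup E] [Module ℝ E]
    {V : Submodule ℝ E} {u d : E} {s t : ℝ} (hs : s ≠ 0) (hd : d ∈ V) (h : s • u + t • d ∈ V) :
    u ∈ V :=
  (V.smul_mem_iff hs).1 (by simpa using V.sub_mem h (V.smul_mem t hd))

lemma degv_sub_degv_wIdx_mem (hX : X.Nonempty) {m : ↥X} (hwm : (wIdx hX : ℝ) < m)
    (hmb : (m : ℝ) < bIdx hX) {V : Submodule ℝ (EuclideanSpace ℝ ↥X)}
    (hd : degv (bIdx hX) - degv (wIdx hX) ∈ V)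
    (hM : ∀ y y' : Lot X, expectation Subtype.val y.1 = m → expectation Subtype.val y'.1 = m →
      y.1 - y'.1 ∈ V)
    (x : ↥X) : degv x - degv (wIdx hX) ∈ V := by
  rcases eq_or_ne x (wIdx hX) with rfl | hxw
  · simp
  rcases eq_or_ne x (bIdx hX) with rfl | hxb
  · exact hd
  suffices ∃ y y' : Lot X, expectation Subtype.val y.1 = m ∧ expectation Subtype.val y'.1 = m ∧
      ∃ s t : ℝ, s ≠ 0 ∧
        y.1 - y'.1 = s • (degv x - degv (wIdx hX)) + t • (degv (bIdx hX) - degv (wIdx hX)) by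
    obtain ⟨y, y', hy, hy', s, t, hs, h⟩ := this
    exact Submodule.mem_of_smul_add_smul_mem hs hd (h ▸ hM y y' hy hy')
  obtain ⟨l, ⟨hl₀, hl₁⟩, hl⟩ := exists_weight_eq hwm.le hmb.le
  rcases le_or_gt (x : ℝ) m with hxm | hmx
  · obtain ⟨a, ⟨ha₀, ha₁⟩, ha⟩ := exists_weight_eq hxm hmb.le
    refine ⟨Lot.mix a ha₀ ha₁ (deg (bIdx hX)) (deg x), Lot.mix l hl₀ hl₁ (deg _) (deg _),
      by rw [expectation_val_mix_deg, ha], by rw [expectation_val_mix_deg, hl], 1 - a, a - l,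
      fun h => by nlinarith, by simp only [Lot.mix_val, deg_val, mixv]; module⟩
  · obtain ⟨a, ⟨ha₀, ha₁⟩, ha⟩ := exists_weight_eq hwm.le hmx.le
    refine ⟨Lot.mix a ha₀ ha₁ (deg x) (deg (wIdx hX)), Lot.mix l hl₀ hl₁ (deg _) (deg _),
      by rw [expectation_val_mix_deg, ha], by rw [expectation_val_mix_deg, hl], a, -l,
      fun h => by subst h; linarith, by simp only [Lot.mix_val, deg_val, mixv]; module⟩

lemma ker_expectation_one_le_span (w : ↥X) :
    LinearMap.ker (expectation (1 : ↥X → ℝ)) ≤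
      Submodule.span ℝ (Set.range fun x => degv x - degv w) := by
  intro u hu
  have hu₀ : ∑ x, u x = 0 := by simpa using hu
  have hrepr : u = ∑ x, u x • (degv x - degv w) := by
    simp only [smul_sub, Finset.sum_sub_distrib, ← Finset.sum_smul, hu₀, zero_smul, sub_zero]
    ext t
    simp [degv]
  rw [hrepr]
  exact Submodule.sum_mem _ fun x _ => Submodule.smul_mem _ _ (Submodule.subset_span ⟨x, rfl⟩)

lemma finrank_ker_expectation_one (hX : X.Nonempty) :
    Module.finrank ℝ (LinearMap.ker (expectation (1 : ↥X → ℝ))) = X.card - 1 := by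
  have hrange : LinearMap.range (expectation (1 : ↥X → ℝ)) = ⊤ :=
    LinearMap.range_eq_top.2 fun t => ⟨t • degv (bIdx hX), by
      rw [map_smul, expectation_degv, Pi.one_apply, smul_eq_mul, mul_one]⟩
  have h := LinearMap.finrank_range_add_finrank_ker (expectation (1 : ↥X → ℝ))
  rw [hrange, finrank_top, Module.finrank_self, finrank_euclideanSpace, Fintype.card_coe] at h
  omega

def spreadMix (hX : X.Nonempty) (r y : Lot X) (m : ↥X) (θ β α : ℝ) : EuclideanSpace ℝ ↥X :=
  β • (r.1 + θ • (y.1 - degv m)) + (1 - β) • (α • degv (bIdx hX) + (1 - α) • degv (wIdx hX))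

def spreadMixtures (hX : X.Nonempty) (r : Lot X) (m : ↥X) (θ β α₁ α₂ : ℝ) :
    Set (EuclideanSpace ℝ ↥X) :=
  {v | ∃ y : Lot X, expectation Subtype.val y.1 = m ∧
    ∃ α ∈ Set.Icc α₁ α₂, spreadMix hX r y m θ β α = v}

section spreadMixtures

variable {hX : X.Nonempty} {r : Lot X} {m : ↥X} {θ β α₁ α₂ : ℝ}

lemma convex_spreadMixtures : Convex ℝ (spreadMixtures hX r m θ β α₁ α₂) := by
  rintro _ ⟨y, hy, α, hα, rfl⟩ _ ⟨y', hy', α', hα', rfl⟩ a b ha hb hab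
  obtain rfl : b = 1 - a := by linarith
  refine ⟨Lot.mix a ha (by linarith) y y', ?_, a * α + (1 - a) * α', ⟨?_, ?_⟩, ?_⟩
  · rw [Lot.mix_val, expectation_mixv, hy, hy']; ring
  · nlinarith [hα.1, hα'.1]
  · nlinarith [hα.2, hα'.2]
  · simp only [spreadMix, Lot.mix_val, mixv]; module

lemma expectation_one_spreadMix (y : Lot X) (α : ℝ) :
    expectation 1 (spreadMix hX r y m θ β α) = 1 := by
  simp only [spreadMix, map_add, map_smul, map_sub, r.expectation_one, y.expectation_one,
    expectation_degv, Pi.one_apply, smul_eq_mul]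
  ring

lemma vectorSpan_spreadMixtures (hwm : (wIdx hX : ℝ) < m) (hmb : (m : ℝ) < bIdx hX)
    (hθ : θ ≠ 0) (hβ₀ : β ≠ 0) (hβ₁ : β ≠ 1) (hα : α₁ < α₂) :
    vectorSpan ℝ (spreadMixtures hX r m θ β α₁ α₂) = LinearMap.ker (expectation 1) := by
  set C := spreadMixtures hX r m θ β α₁ α₂
  apply le_antisymm
  · rw [vectorSpan_def, Submodule.span_le]
    rintro _ ⟨_, ⟨y, -, α, -, rfl⟩, _, ⟨y', -, α', -, rfl⟩, rfl⟩
    simp only [SetLike.mem_coe, LinearMap.mem_ker, vsub_eq_sub, map_sub,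
      expectation_one_spreadMix, sub_self]
  refine (ker_expectation_one_le_span (wIdx hX)).trans (Submodule.span_le.2 ?_)
  rintro _ ⟨x, rfl⟩
  have hsub {y y' : Lot X} (hy : expectation Subtype.val y.1 = m)
      (hy' : expectation Subtype.val y'.1 = m) {α α' : ℝ} (hα : α ∈ Set.Icc α₁ α₂)
      (hα' : α' ∈ Set.Icc α₁ α₂) :
      spreadMix hX r y m θ β α - spreadMix hX r y' m θ β α' ∈ vectorSpan ℝ C :=
    vsub_mem_vectorSpan ℝ ⟨y, hy, α, hα, rfl⟩ ⟨y', hy', α', hα', rfl⟩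
  obtain ⟨l, ⟨hl₀, hl₁⟩, hl⟩ := exists_weight_eq hwm.le hmb.le
  have hŷ : expectation Subtype.val (Lot.mix l hl₀ hl₁ (deg (bIdx hX)) (deg (wIdx hX))).1 = m := by
    rw [expectation_val_mix_deg, hl]
  refine degv_sub_degv_wIdx_mem hX hwm hmb ?_ (fun y y' hy hy' => ?_) x
  · refine ((vectorSpan ℝ C).smul_mem_iff
      (mul_ne_zero (sub_ne_zero.2 hβ₁.symm) (sub_ne_zero.2 hα.ne'))).1 ?_
    convert hsub hŷ hŷ ⟨hα.le, le_rfl⟩ ⟨le_rfl, hα.le⟩ using 1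
    simp only [spreadMix]; module
  · refine ((vectorSpan ℝ C).smul_mem_iff (mul_ne_zero hβ₀ hθ)).1 ?_
    convert hsub hy hy' ⟨le_rfl, hα.le⟩ ⟨le_rfl, hα.le⟩ using 1
    simp only [spreadMix]; module

end spreadMixtures

lemma RiskConsistent.exists_lot_of_mem_spreadMixtures {hX : X.Nonempty}
    {R : Lot X → Lot X → Prop} [IsPreorder (Lot X) R] (hrc : RiskConsistent hX R) {r : Lot X}
    {m : ↥X} (hmb : m ≠ bIdx hX) (hmw : m ≠ wIdx hX) {η : ℝ} (hη₀ : 0 < η) (hη₁ : η < 1)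
    (hηm : η ≤ r.1 m) (hgap : r.1 (bIdx hX) + 4 * η < 1 - r.1 (wIdx hX)) {v : EuclideanSpace ℝ ↥X}
    (hv : v ∈ spreadMixtures hX r m η η (1 - r.1 (wIdx hX) - 3 * η) (1 - r.1 (wIdx hX) - 2 * η)) :
    ∃ p : Lot X, p.1 = v ∧ R r p ∧ dist p (Lot.shiftToBest hX r) ≤ 8 * η := by
  obtain ⟨y, hy, α, ⟨hα₁, hα₂⟩, rfl⟩ := hv
  have hα₀ : 0 ≤ α := by linarith [r.2.1 (bIdx hX)]
  have hα₁' : α ≤ 1 := by linarith [r.2.1 (wIdx hX)]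
  set z := Lot.spread r y m η hη₀.le hηm
  set eα := Lot.mix α hα₀ hα₁' (deg (bIdx hX)) (deg (wIdx hX))
  set p := Lot.mix η hη₀.le hη₁.le z eα
  have hzb : z.1 (bIdx hX) ≤ r.1 (bIdx hX) + η := Lot.spread_apply_le (Ne.symm hmb)
  have hzw : z.1 (wIdx hX) ≤ r.1 (wIdx hX) + η := Lot.spread_apply_le (Ne.symm hmw)
  have hES : ES hX p z := ⟨η, α, hη₀.le, hη₁, by linarith, by linarith, rfl⟩
  refine ⟨p, rfl, _root_.trans (hrc.rel_spread hη₀.le hηm hy) (hrc p z (Or.inr hES)), ?_⟩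
  calc dist p (Lot.shiftToBest hX r) ≤ dist p eα + dist eα (Lot.shiftToBest hX r) :=
        dist_triangle _ _ _
    _ = η * dist z eα + |α - (1 - r.1 (wIdx hX))| * dist (deg (bIdx hX)) (deg (wIdx hX)) := by
        rw [Lot.dist_mix_right, Lot.shiftToBest, Lot.dist_mix_mix]
    _ ≤ η * 2 + (3 * η) * 2 := by
        gcongr
        · exact Lot.dist_le_two _ _
        · rw [abs_le]; constructor <;> linarith
        · exact Lot.dist_le_two _ _
    _ = 8 * η := by ring

lemma exists_pos_of_not_inBW {hX : X.Nonempty} {r : Lot X} (hr : ¬ inBW hX r) :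
    ∃ m : ↥X, m ≠ bIdx hX ∧ m ≠ wIdx hX ∧ 0 < r.1 m := by
  simp only [inBW, not_forall] at hr
  obtain ⟨m, hmb, hmw, hm⟩ := hr
  exact ⟨m, hmb, hmw, (r.2.1 m).lt_of_ne' hm⟩

theorem stmt13_general (X : Finset ℝ) (hX : X.Nonempty)
    (c : Finset (Lot X) → Finset (Lot X))
    (hFOSD : FOSDAxiom c) (hcont : ClosedGraphC c)
    (R : Lot X → Lot X → Prop) (hlin : IsLinearOrder (Lot X) R)
    (hrc : RiskConsistent hX R) :
    ∀ r : Lot X, ¬ inBW hX r →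
    ∃ C : Set (EuclideanSpace ℝ ↥X),
      (∀ v ∈ C, ∃ p : Lot X, p.1 = v ∧ R r p ∧ r ∉ c {p, r}) ∧
      Convex ℝ C ∧
      Module.finrank ℝ (affineSpan ℝ C).direction = X.card - 1 := by
  intro r hr
  obtain ⟨m, hmb, hmw, hrm⟩ := exists_pos_of_not_inBW hr
  have hwm := wIdx_lt_of_ne hX hmw
  have hmb' := lt_bIdx_of_ne hX hmb
  have hmass := r.apply_add_apply_add_apply_le (x := bIdx hX) (fun h => by rw [h] at hmb'; linarith)
    (Ne.symm hmb) (Ne.symm hmw)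
  obtain ⟨δ, hδ, hball⟩ := Metric.isOpen_iff.1 (hcont.isOpen_setOf_notMem_pair r) _
    (hFOSD.notMem_pair_shiftToBest hmb hmw hrm)
  set η := min (r.1 m) δ / 10
  have hη₀ : 0 < η := by positivity
  have hηm : η ≤ r.1 m / 10 := div_le_div_of_nonneg_right (min_le_left _ _) (by norm_num)
  have hηδ : η ≤ δ / 10 := div_le_div_of_nonneg_right (min_le_right _ _) (by norm_num)
  have hm₁ := r.apply_le_one m
  have := hlin
  refine ⟨spreadMixtures hX r m η η (1 - r.1 (wIdx hX) - 3 * η) (1 - r.1 (wIdx hX) - 2 * η),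
    fun v hv => ?_, convex_spreadMixtures, ?_⟩
  · obtain ⟨p, rfl, hrp, hdist⟩ := hrc.exists_lot_of_mem_spreadMixtures hmb hmw hη₀
      (by linarith) (by linarith) (by linarith) hv
    exact ⟨p, rfl, hrp, hball (Metric.mem_ball.2 (by linarith))⟩
  · rw [direction_affineSpan, vectorSpan_spreadMixtures hwm hmb' hη₀.ne' hη₀.ne' (by linarith)
      (by linarith), finrank_ker_expectation_one hX]

/-- Lemma 3: under FOSD, Continuity, and reference-dependent WARP and
Independence w.r.t. a risk-consistent linear order `R`, the strict prediction set
`ℙ₊^r = {p : r R p and r ∉ c({p,r})}` of any `r ∉ Δ({b,w})` contains a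
full-dimensional convex subset of `Δ(X)`. -/
theorem stmt13 (X : Finset ℝ) (hX : X.Nonempty) (hcard : 2 ≤ X.card)
    (c : Finset (Lot X) → Finset (Lot X))
    (hc : ∀ A : Finset (Lot X), A.Nonempty → c A ⊆ A ∧ (c A).Nonempty)
    (hFOSD : FOSDAxiom c) (hcont : ClosedGraphC c)
    (R : Lot X → Lot X → Prop) (hlin : IsLinearOrder (Lot X) R)
    (hrc : RiskConsistent hX R)
    (href : ∀ r : Lot X,
      WARPover c {B : Finset (Lot X) | r ∈ B ∧ ∀ p ∈ B, R r p} ∧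
      IndepOver c {B : Finset (Lot X) | r ∈ B ∧ ∀ p ∈ B, R r p}) :
    ∀ r : Lot X, ¬ inBW hX r →
    ∃ C : Set (EuclideanSpace ℝ ↥X),
      (∀ v ∈ C, ∃ p : Lot X, p.1 = v ∧ R r p ∧ r ∉ c {p, r}) ∧
      Convex ℝ C ∧
      Module.finrank ℝ (affineSpan ℝ C).direction = X.card - 1 :=
  stmt13_general X hX c hFOSD hcont R hlin hrc

end
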